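/- There exists a constant c < ∞ such that for all 0 < r ≤ 1 and all 0 ≤ x ≤ π, A(r,x) ≤ (c/r²) · exp( −(2π/r)·(π − x) ). -/

import Mathlib

open Real

/-- The annulus function
`A(r,x) = (π²/(4r²)) ∑_{k ≠ 0} cosh(πx/(2r))² / (sinh(π²k/r)² cosh(π(x-2πk)/(2r))²)`. -/
noncomputable def Afun (r x : ℝ) : ℝ :=
  (π ^ 2 / (4 * r ^ 2)) * ∑' k : {k : ℤ // k ≠ 0},
    (Real.cosh (π * x / (2 * r))) ^ 2 /
      ((Real.sinh (π ^ 2 * ((k : ℤ) : ℝ) / r)) ^ 2 *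
        (Real.cosh (π * (x - 2 * π * ((k : ℤ) : ℝ)) / (2 * r))) ^ 2)

/-!
Bounding `cosh` above and `sinh`, `cosh` below by exponentials, the `k`-th term of `A(r,x)` is at
most `64 exp(2(|u| - |v| - |w|))` with `u = πx/(2r)`, `v = π²k/r`, `w = π(x - 2πk)/(2r)`. Since
`|x - 2πk| ≥ 2π|k| - x`, this exponent is at most `2π² - (2π/r)(π - x) - 4π²|k|` once `r ≤ 1`:
the factor `exp(-(2π/r)(π - x))` comes out of every term and what is left is a convergent
geometric series in `|k|`, independent of `r` and `x`.
-/

namespace Real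

lemma cosh_le_exp_abs (y : ℝ) : cosh y ≤ exp |y| := by
  rw [← cosh_abs, cosh_eq]
  linarith [exp_le_exp.2 (neg_le_self (abs_nonneg y))]

lemma exp_le_four_sinh {y : ℝ} (hy : 1 ≤ y) : exp y ≤ 4 * sinh y := by
  have h2 : 2 ≤ exp y := by linarith [add_one_le_exp y]
  have h1 : exp (-y) * exp y = 1 := by rw [← exp_add, neg_add_cancel, exp_zero]
  rw [sinh_eq]
  nlinarith [exp_pos (-y)]

lemma cosh_div_abs_sinh_mul_cosh_le {u v w : ℝ} (hv : 1 ≤ |v|) :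
    cosh u / (|sinh v| * cosh w) ≤ 8 * exp (|u| - |v| - |w|) := by
  have hsinh : exp |v| / 4 ≤ |sinh v| := by rw [abs_sinh]; linarith [exp_le_four_sinh hv]
  have hcosh : exp |w| / 2 ≤ cosh w := by rw [cosh_eq]; linarith [exp_abs_le w]
  calc cosh u / (|sinh v| * cosh w)
      ≤ exp |u| / (exp |v| / 4 * (exp |w| / 2)) := by
        gcongr
        exact cosh_le_exp_abs u
    _ = 8 * exp (|u| - |v| - |w|) := by
        rw [exp_sub, exp_sub]; field_simp; ring

lemma cosh_sq_div_sinh_sq_mul_cosh_sq_le {u v w : ℝ} (hv : 1 ≤ |v|) :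
    cosh u ^ 2 / (sinh v ^ 2 * cosh w ^ 2) ≤ 64 * exp (2 * (|u| - |v| - |w|)) := by
  have h := pow_le_pow_left₀ (by positivity) (cosh_div_abs_sinh_mul_cosh_le (u := u) (w := w) hv) 2
  rwa [div_pow, mul_pow, sq_abs, mul_pow, ← exp_nat_mul, Nat.cast_ofNat,
    show (8 : ℝ) ^ 2 = 64 by norm_num] at h

lemma summable_exp_neg_mul_abs_int {a : ℝ} (ha : 0 < a) :
    Summable fun k : ℤ ↦ exp (-a * |(k : ℝ)|) := by
  have h : Summable fun n : ℕ ↦ exp (n * -a) := summable_exp_nat_mul_iff.2 (by linarith)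
  refine .of_nat_of_neg ?_ ?_ <;> simpa [mul_comm] using h

end Real

noncomputable def Afun.term (r x : ℝ) (k : ℤ) : ℝ :=
  cosh (π * x / (2 * r)) ^ 2 / (sinh (π ^ 2 * k / r) ^ 2 * cosh (π * (x - 2 * π * k) / (2 * r)) ^ 2)

section Estimates

variable {r x : ℝ} (hr : 0 < r) (hr1 : r ≤ 1) (hx : 0 ≤ x)
include hr hr1 hx

lemma Afun.term_exponent_le {k : ℤ} (hk : k ≠ 0) :
    2 * (|π * x / (2 * r)| - |π ^ 2 * k / r| - |π * (x - 2 * π * k) / (2 * r)|) ≤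
      2 * π ^ 2 + -(2 * π / r) * (π - x) + -(4 * π ^ 2) * |(k : ℝ)| := by
  have hπ := pi_pos
  have hk1 : 1 ≤ |(k : ℝ)| := by exact_mod_cast Int.one_le_abs hk
  have hdist : 2 * π * |(k : ℝ)| - x ≤ |x - 2 * π * k| := by
    have := abs_sub_abs_le_abs_sub (2 * π * (k : ℝ)) x
    rwa [abs_sub_comm, abs_mul, abs_of_pos two_pi_pos, abs_of_nonneg hx] at this
  have hslack : 0 ≤ (4 * π ^ 2 * |(k : ℝ)| - 2 * π ^ 2) * (1 / r - 1) := by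
    apply mul_nonneg
    · nlinarith
    · rw [sub_nonneg, le_div_iff₀ hr]; linarith
  simp only [abs_div, abs_mul, abs_of_pos hπ, abs_of_pos hr, abs_of_nonneg hx, abs_two, abs_pow]
  calc _ ≤ 2 * (π * x / (2 * r) - π ^ 2 * |(k : ℝ)| / r
          - π * (2 * π * |(k : ℝ)| - x) / (2 * r)) := by
        gcongr
    _ = 2 * π ^ 2 + -(2 * π / r) * (π - x) + -(4 * π ^ 2) * |(k : ℝ)|
          - (4 * π ^ 2 * |(k : ℝ)| - 2 * π ^ 2) * (1 / r - 1) := by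
        field_simp; ring
    _ ≤ _ := by linarith

lemma Afun.term_le {k : ℤ} (hk : k ≠ 0) :
    Afun.term r x k ≤ 64 * exp (2 * π ^ 2) * exp (-(2 * π / r) * (π - x)) *
      exp (-(4 * π ^ 2) * |(k : ℝ)|) := by
  have hv : 1 ≤ |π ^ 2 * k / r| := by
    rw [abs_div, abs_mul, abs_of_pos hr, abs_of_pos (by positivity), le_div_iff₀ hr, one_mul]
    have hk1 : 1 ≤ |(k : ℝ)| := by exact_mod_cast Int.one_le_abs hk
    nlinarith [pi_gt_three]
  calc Afun.term r x k ≤ 64 * exp (2 * (|π * x / (2 * r)| - |π ^ 2 * k / r|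
          - |π * (x - 2 * π * k) / (2 * r)|)) :=
        cosh_sq_div_sinh_sq_mul_cosh_sq_le hv
    _ ≤ 64 * exp (2 * π ^ 2 + -(2 * π / r) * (π - x) + -(4 * π ^ 2) * |(k : ℝ)|) := by
        gcongr
        exact Afun.term_exponent_le hr hr1 hx hk
    _ = _ := by rw [exp_add, exp_add]; ring

end Estimates

/-- There is `c < ∞` with `A(r,x) ≤ (c/r²) exp(-(2π/r)(π-x))` for `0 < r ≤ 1`, `0 ≤ x ≤ π`. -/
theorem stmt7 : ∃ c : ℝ, ∀ r : ℝ, 0 < r → r ≤ 1 → ∀ x : ℝ, 0 ≤ x → x ≤ π →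
    Afun r x ≤ (c / r ^ 2) * Real.exp (-(2 * π / r) * (π - x)) := by
  set q : {k : ℤ // k ≠ 0} → ℝ := fun k ↦ exp (-(4 * π ^ 2) * |((k : ℤ) : ℝ)|)
  have hq : Summable q := (summable_exp_neg_mul_abs_int (by positivity)).subtype _
  refine ⟨16 * π ^ 2 * exp (2 * π ^ 2) * ∑' k, q k, fun r hr hr1 x hx _ ↦ ?_⟩
  have hterm : ∀ k : {k : ℤ // k ≠ 0}, Afun.term r x k ≤
      64 * exp (2 * π ^ 2) * exp (-(2 * π / r) * (π - x)) * q k :=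
    fun k ↦ Afun.term_le hr hr1 hx k.2
  have hterm_summable := (hq.mul_left _).of_nonneg_of_le (fun k ↦ by unfold Afun.term; positivity) hterm
  calc Afun r x = π ^ 2 / (4 * r ^ 2) * ∑' k : {k : ℤ // k ≠ 0}, Afun.term r x k := rfl
    _ ≤ π ^ 2 / (4 * r ^ 2) * ∑' k, 64 * exp (2 * π ^ 2) * exp (-(2 * π / r) * (π - x)) * q k := by
        have := hterm_summable.tsum_le_tsum hterm (hq.mul_left _)
        exact mul_le_mul_of_nonneg_left this (by positivity)
    _ = _ := by rw [tsum_mul_left]; field_simp; ring
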